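/- Let n ≥ 3, let z_1, ..., z_n be i.i.d. rate-1 exponential random variables, λ > 0, and r_1, ..., r_n ≥ 0. Let R_n = Σ_{i=1}^n r_i and α_n = Π_{i=1}^n (2^{r_i}−1). Then P(Σ_{i∈M} z_i ≥ λ(2^{Σ_{i∈M} r_i} − 1) for every nonempty M ⊆ {1,...,n}) ≥ e^{-λ(2^{R_n}−1)} · G(λα_n), where G(x) = x²/2 + x + 1. -/

import Mathlib

open MeasureTheory ProbabilityTheory Real

/-- The product measure of `n` i.i.d. rate-1 exponential random variables. -/
noncomputable def iidExp (ι : Type*) [Fintype ι] : Measure (ι → ℝ) :=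
  haveI : IsProbabilityMeasure (expMeasure 1) := isProbabilityMeasure_expMeasure one_pos
  Measure.pi fun _ => expMeasure 1

/-!
Write `a i = 2 ^ r i - 1`, so that `2 ^ (∑ i ∈ M, r i) = ∏ i ∈ M, (1 + a i)`, and let
`x = lam * ∏ i, a i`. The weights `w i = a i * ∏ j < i, (1 + a j)` satisfy
`∏ i ∈ M, (1 + a i) - 1 ≤ ∑ i ∈ M, w i` for every `M`, with equality for `M = univ` and with the
extra slack `∏ i, a i` when `M` contains the last index but not every index. Hence, if `c` is
`lam • w` lowered by `x` at the last index, every `z ≥ c` whose total excess `∑ i, (z i - c i)`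
is at least `x` lies in the non-outage event. By memorylessness that excess is again an i.i.d.
exponential vector, so this event has probability
`exp (-∑ i, c i) * P(Erlang(n) ≥ x) = exp (-lam * (2 ^ R - 1)) * exp (-x) * ∑ j < n, x ^ j / j!`,
and for `n ≥ 3` the Erlang tail is at least `exp (-x) * G x`.
-/

open scoped ENNReal Nat

open Finset in
theorem prod_one_add_add_prod_le {ι : Type*} {a : ι → ℝ} (ha : 0 ≤ a) {s t : Finset ι}
    (hst : s ⊂ t) : ∏ i ∈ s, (1 + a i) + ∏ i ∈ t, a i ≤ ∏ i ∈ t, (1 + a i) := by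
  classical
  have ht : t ∉ s.powerset := fun h => hst.not_subset (mem_powerset.1 h)
  rw [prod_one_add, prod_one_add, add_comm, ← sum_insert ht (f := fun u => ∏ i ∈ u, a i)]
  exact sum_le_sum_of_subset_of_nonneg
    (insert_subset (mem_powerset_self t) (powerset_mono.2 hst.subset))
    fun u _ _ => prod_nonneg fun i _ => ha i

section SuccessiveWeight

open Finset

variable {ι : Type*} [Fintype ι] [LinearOrder ι] {a : ι → ℝ} {m : ι}

/-- With `a i = 2 ^ r i - 1` this is `2 ^ (∑ j < i, r j) * (2 ^ r i - 1)`. -/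
noncomputable def successiveWeight (a : ι → ℝ) (i : ι) : ℝ :=
  a i * ∏ j ∈ univ with j < i, (1 + a j)

theorem sum_successiveWeight (a : ι → ℝ) :
    ∑ i, successiveWeight a i = ∏ i, (1 + a i) - 1 := by
  rw [prod_one_add_ordered]
  simp [successiveWeight]

theorem prod_one_add_sub_one_le_sum_successiveWeight (ha : 0 ≤ a) (s : Finset ι) :
    ∏ i ∈ s, (1 + a i) - 1 ≤ ∑ i ∈ s, successiveWeight a i := by
  rw [prod_one_add_ordered, add_sub_cancel_left]
  refine sum_le_sum fun i _ => mul_le_mul_of_nonneg_left ?_ (ha i)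
  exact prod_le_prod_of_subset_of_one_le (filter_subset_filter _ (subset_univ s))
    (fun j _ => add_nonneg zero_le_one (ha j)) fun j _ _ => le_add_of_nonneg_right (ha j)

theorem successiveWeight_of_isTop (hm : IsTop m) :
    successiveWeight a m = a m * ∏ j ∈ univ.erase m, (1 + a j) := by
  rw [successiveWeight]
  congr 2
  ext j
  simp [lt_iff_le_and_ne, hm j]

theorem prod_le_successiveWeight (ha : 0 ≤ a) (hm : IsTop m) :
    ∏ i, a i ≤ successiveWeight a m := by
  rw [successiveWeight_of_isTop hm, ← mul_prod_erase univ a (mem_univ m)]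
  exact mul_le_mul_of_nonneg_left
    (prod_le_prod (fun i _ => ha i) fun i _ => le_add_of_nonneg_left zero_le_one) (ha m)

theorem prod_one_add_sub_one_add_prod_le_sum_successiveWeight (ha : 0 ≤ a) (hm : IsTop m)
    {s : Finset ι} (hms : m ∈ s) {j : ι} (hjs : j ∉ s) :
    ∏ i ∈ s, (1 + a i) - 1 + ∏ i, a i ≤ ∑ i ∈ s, successiveWeight a i := by
  have hsub : s.erase m ⊂ univ.erase m :=
    (ssubset_iff_of_subset (erase_subset_erase m (subset_univ s))).2
      ⟨j, mem_erase.2 ⟨ne_of_mem_of_not_mem hms hjs |>.symm, mem_univ j⟩,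
        fun h => hjs (mem_of_mem_erase h)⟩
  have hgap := mul_le_mul_of_nonneg_left (prod_one_add_add_prod_le ha hsub) (ha m)
  have hrest := prod_one_add_sub_one_le_sum_successiveWeight ha (s.erase m)
  rw [← mul_prod_erase s _ hms, ← add_sum_erase s _ hms, ← mul_prod_erase univ a (mem_univ m),
    successiveWeight_of_isTop hm]
  linarith

noncomputable def cornerThreshold (lam : ℝ) (a : ι → ℝ) (m : ι) : ι → ℝ :=
  lam • successiveWeight a - Pi.single m (lam * ∏ i, a i)

theorem cornerThreshold_nonneg {lam : ℝ} (ha : 0 ≤ a) (hlam : 0 ≤ lam) (hm : IsTop m) :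
    0 ≤ cornerThreshold lam a m := by
  intro i
  rcases eq_or_ne i m with rfl | hi
  · simpa [cornerThreshold] using mul_le_mul_of_nonneg_left (prod_le_successiveWeight ha hm) hlam
  · simpa [cornerThreshold, hi, successiveWeight] using
      mul_nonneg hlam (mul_nonneg (ha i) (prod_nonneg fun j _ => add_nonneg zero_le_one (ha j)))

theorem sum_cornerThreshold (lam : ℝ) (a : ι → ℝ) (m : ι) (s : Finset ι) :
    ∑ i ∈ s, cornerThreshold lam a m i
      = lam * ∑ i ∈ s, successiveWeight a i - if m ∈ s then lam * ∏ i, a i else 0 := by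
  simp [cornerThreshold, sum_sub_distrib, mul_sum, sum_pi_single']

theorem le_sum_of_cornerThreshold_le {lam : ℝ} (ha : 0 ≤ a) (hlam : 0 ≤ lam) (hm : IsTop m)
    {z : ι → ℝ} (hz : cornerThreshold lam a m ≤ z)
    (hslack : lam * ∏ i, a i ≤ ∑ i, (z i - cornerThreshold lam a m i)) (s : Finset ι) :
    lam * (∏ i ∈ s, (1 + a i) - 1) ≤ ∑ i ∈ s, z i := by
  have hcz : ∑ i ∈ s, cornerThreshold lam a m i ≤ ∑ i ∈ s, z i := sum_le_sum fun i _ => hz i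
  have hsum := sum_cornerThreshold lam a m s
  by_cases hms : m ∈ s
  · rw [if_pos hms] at hsum
    by_cases hsu : s = univ
    · subst hsu
      rw [sum_sub_distrib] at hslack
      rw [sum_successiveWeight] at hsum
      linarith
    · obtain ⟨j, hj⟩ : ∃ j, j ∉ s := by simpa [eq_univ_iff_forall] using hsu
      linarith [mul_le_mul_of_nonneg_left
        (prod_one_add_sub_one_add_prod_le_sum_successiveWeight ha hm hms hj) hlam]
  · rw [if_neg hms] at hsum
    linarith [mul_le_mul_of_nonneg_left (prod_one_add_sub_one_le_sum_successiveWeight ha s) hlam]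

end SuccessiveWeight

section Exponential

open Set

instance : IsProbabilityMeasure (expMeasure 1) := isProbabilityMeasure_expMeasure one_pos

theorem expMeasure_one_eq_withDensity : expMeasure 1 = volume.withDensity (exponentialPDF 1) :=
  rfl

theorem indicator_Ici_exponentialPDF_add {c : ℝ} (hc : 0 ≤ c) (u : ℝ) :
    (Ici c).indicator (exponentialPDF 1) (u + c)
      = ENNReal.ofReal (exp (-c)) * exponentialPDF 1 u := by
  rcases le_or_gt 0 u with hu | hu
  · rw [indicator_of_mem (by simpa using hu), exponentialPDF_of_nonneg (by linarith),
      exponentialPDF_of_nonneg hu, ← ENNReal.ofReal_mul (exp_pos _).le]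
    simp only [one_mul, ← exp_add]
    ring_nf
  · rw [indicator_of_notMem (by simpa using hu), exponentialPDF_of_neg hu, mul_zero]

theorem expMeasure_one_Ici_inter_preimage_sub {c : ℝ} (hc : 0 ≤ c) {s : Set ℝ}
    (hs : MeasurableSet s) :
    expMeasure 1 (Ici c ∩ (· - c) ⁻¹' s) = ENNReal.ofReal (exp (-c)) * expMeasure 1 s := by
  have hpre : MeasurableSet (Ici c ∩ (· - c) ⁻¹' s) :=
    measurableSet_Ici.inter (measurable_sub_const c hs)
  rw [expMeasure_one_eq_withDensity, withDensity_apply _ hpre, withDensity_apply _ hs,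
    ← lintegral_indicator hpre, ← lintegral_add_right_eq_self _ c, ← lintegral_indicator hs,
    ← lintegral_const_mul' _ _ ENNReal.ofReal_ne_top]
  congr 1 with u
  rw [inter_comm, ← indicator_indicator]
  by_cases hu : u ∈ s
  · rw [indicator_of_mem (show u + c ∈ (· - c) ⁻¹' s by simpa using hu), indicator_of_mem hu,
      indicator_Ici_exponentialPDF_add hc]
  · rw [indicator_of_notMem (show u + c ∉ (· - c) ⁻¹' s by simpa using hu),
      indicator_of_notMem hu, mul_zero]

theorem expMeasure_one_Ici {c : ℝ} (hc : 0 ≤ c) :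
    expMeasure 1 (Ici c) = ENNReal.ofReal (exp (-c)) := by
  simpa using expMeasure_one_Ici_inter_preimage_sub hc MeasurableSet.univ

end Exponential

section IidExp

open Set

variable {ι : Type*} [Fintype ι]

theorem iidExp_eq_pi : iidExp ι = Measure.pi fun _ => expMeasure 1 := rfl

instance : IsProbabilityMeasure (iidExp ι) := by
  rw [iidExp_eq_pi]
  infer_instance

theorem iidExp_map_sub_restrict_Ici {c : ι → ℝ} (hc : 0 ≤ c) :
    ((iidExp ι).restrict (Ici c)).map (· - c) = ENNReal.ofReal (exp (-∑ i, c i)) • iidExp ι := by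
  have hbox : ∀ s : ι → Set ℝ, (∀ i, MeasurableSet (s i)) →
      ((iidExp ι).restrict (Ici c)).map (· - c) (pi univ s)
        = (ENNReal.ofReal (exp (-∑ i, c i)) • iidExp ι) (pi univ s) := by
    intro s hs
    have hpre : (· - c) ⁻¹' pi univ s ∩ Ici c = pi univ fun i => Ici (c i) ∩ (· - c i) ⁻¹' s i := by
      ext z
      simp [and_comm, forall_and, Pi.le_def]
    rw [Measure.map_apply (measurable_sub_const c) (.univ_pi hs),
      Measure.restrict_apply (measurable_sub_const c (.univ_pi hs)), hpre, Measure.smul_apply,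
      iidExp_eq_pi, Measure.pi_pi, Measure.pi_pi, smul_eq_mul, ← Finset.sum_neg_distrib, exp_sum,
      ENNReal.ofReal_prod_of_nonneg fun i _ => (exp_pos _).le, ← Finset.prod_mul_distrib]
    exact Finset.prod_congr rfl fun i _ => expMeasure_one_Ici_inter_preimage_sub (hc i) (hs i)
  refine ext_of_generate_finite _ generateFrom_pi.symm isPiSystem_pi ?_ ?_
  · rintro _ ⟨s, hs, rfl⟩
    exact hbox s fun i => hs i (mem_univ i)
  · simpa using hbox (fun _ => univ) fun _ => .univ

theorem iidExp_setOf_le_sum_eq_one {x : ℝ} (hx : x ≤ 0) : iidExp ι {y | x ≤ ∑ i, y i} = 1 := by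
  refine le_antisymm prob_le_one ?_
  calc (1 : ℝ≥0∞) = iidExp ι (pi univ fun _ => Ici 0) := by
        rw [iidExp_eq_pi, Measure.pi_pi]
        simp [expMeasure_one_Ici]
    _ ≤ iidExp ι {y | x ≤ ∑ i, y i} :=
        measure_mono fun y hy => hx.trans (Finset.sum_nonneg fun i _ => hy i (mem_univ i))

theorem iidExp_fin_succ_setOf_le_sum (k : ℕ) (x : ℝ) :
    iidExp (Fin (k + 1)) {y | x ≤ ∑ i, y i}
      = ∫⁻ u, iidExp (Fin k) {w | x - u ≤ ∑ i, w i} ∂expMeasure 1 := by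
  have hA : MeasurableSet {p : ℝ × (Fin k → ℝ) | x ≤ p.1 + ∑ i, p.2 i} :=
    measurableSet_le measurable_const (by fun_prop)
  have hpres := (measurePreserving_piFinSuccAbove (fun _ : Fin (k + 1) => expMeasure 1) 0)
    |>.measure_preimage hA.nullMeasurableSet
  rw [iidExp_eq_pi]
  convert hpres using 2
  · ext y
    simp [Fin.sum_univ_succ, MeasurableEquiv.piFinSuccAbove_apply, Fin.tail]
  · rw [Measure.prod_apply hA]
    congr 1 with u
    rw [iidExp_eq_pi]
    congr 1 with w
    exact sub_le_iff_le_add' (b := u)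

end IidExp

section Erlang

open Set

theorem lintegral_expMeasure_one (f : ℝ → ℝ≥0∞) :
    ∫⁻ u, f u ∂expMeasure 1 = ∫⁻ u in Ici 0, ENNReal.ofReal (exp (-u)) * f u := by
  have hpdf : Measurable (exponentialPDF 1) := (measurable_exponentialPDFReal 1).ennreal_ofReal
  rw [expMeasure_one_eq_withDensity, lintegral_withDensity_eq_lintegral_mul_non_measurable _ hpdf
    (ae_of_all _ fun _ => ENNReal.ofReal_lt_top),
    ← lintegral_indicator measurableSet_Ici]
  congr 1 with u
  rcases le_or_gt 0 u with hu | hu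
  · simp [indicator_of_mem (show u ∈ Ici 0 from hu), exponentialPDF_of_nonneg hu]
  · simp [indicator_of_notMem (show u ∉ Ici 0 from not_le.2 hu), exponentialPDF_of_neg hu]

theorem integral_sum_sub_pow_div_factorial (k : ℕ) (x : ℝ) :
    ∫ u in (0)..x, ∑ j ∈ Finset.range k, (x - u) ^ j / j !
      = ∑ j ∈ Finset.range k, x ^ (j + 1) / (j + 1)! := by
  rw [intervalIntegral.integral_finsetSum fun j _ =>
    Continuous.intervalIntegrable (by fun_prop) _ _]
  refine Finset.sum_congr rfl fun j _ => ?_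
  rw [intervalIntegral.integral_div, intervalIntegral.integral_comp_sub_left (fun u => u ^ j),
    integral_pow, Nat.factorial_succ]
  push_cast
  field_simp
  ring

theorem iidExp_fin_setOf_le_sum_of_pos (k : ℕ) {x : ℝ} (hx : 0 < x) :
    iidExp (Fin k) {y | x ≤ ∑ i, y i}
      = ENNReal.ofReal (exp (-x) * ∑ j ∈ Finset.range k, x ^ j / j !) := by
  induction k generalizing x with
  | zero => simp [hx.not_ge]
  | succ k ih =>
    have hIco : ∀ u ∈ Ico 0 x, ENNReal.ofReal (exp (-u)) * iidExp (Fin k) {w | x - u ≤ ∑ i, w i}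
        = ENNReal.ofReal (exp (-x) * ∑ j ∈ Finset.range k, (x - u) ^ j / j !) := by
      intro u hu
      rw [ih (sub_pos.2 hu.2), ← ENNReal.ofReal_mul (exp_pos _).le, ← mul_assoc, ← exp_add]
      ring_nf
    have hIci : ∀ u ∈ Ici x, ENNReal.ofReal (exp (-u)) * iidExp (Fin k) {w | x - u ≤ ∑ i, w i}
        = ENNReal.ofReal (exp (-u)) := by
      intro u hu
      rw [iidExp_setOf_le_sum_eq_one (sub_nonpos.2 hu), mul_one]
    have hpoly : ∀ u ∈ Ico 0 x, 0 ≤ exp (-x) * ∑ j ∈ Finset.range k, (x - u) ^ j / j ! :=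
      fun u hu => mul_nonneg (exp_pos _).le
        (Finset.sum_nonneg fun j _ =>
          div_nonneg (pow_nonneg (sub_nonneg.2 hu.2.le) j) (by positivity))
    have hexp : IntegrableOn (fun u => exp (-u)) (Ici x) := by
      simpa using (exp_neg_integrableOn_Ioi x one_pos).congr_set_ae Ioi_ae_eq_Ici.symm
    rw [iidExp_fin_succ_setOf_le_sum, lintegral_expMeasure_one, ← Ico_union_Ici_eq_Ici hx.le,
      lintegral_union measurableSet_Ici ((Iio_disjoint_Ici le_rfl).mono_left Ico_subset_Iio_self),
      setLIntegral_congr_fun measurableSet_Ico hIco, setLIntegral_congr_fun measurableSet_Ici hIci,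
      ← ofReal_integral_eq_lintegral_ofReal hexp (ae_of_all _ fun _ => (exp_pos _).le),
      ← ofReal_integral_eq_lintegral_ofReal, ← ENNReal.ofReal_add]
    · congr 1
      rw [integral_Ico_eq_integral_Ioc, ← intervalIntegral.integral_of_le hx.le,
        intervalIntegral.integral_const_mul, integral_sum_sub_pow_div_factorial,
        integral_Ici_eq_integral_Ioi, integral_exp_neg_Ioi, Finset.sum_range_succ' _ k]
      simp
      ring
    · exact setIntegral_nonneg measurableSet_Ico hpoly
    · exact integral_nonneg fun _ => (exp_pos _).le
    · exact (Continuous.integrableOn_Icc (by fun_prop)).mono_set Ico_subset_Icc_self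
    · exact ae_restrict_of_forall_mem measurableSet_Ico hpoly

theorem iidExp_fin_setOf_le_sum {k : ℕ} (hk : k ≠ 0) {x : ℝ} (hx : 0 ≤ x) :
    iidExp (Fin k) {y | x ≤ ∑ i, y i}
      = ENNReal.ofReal (exp (-x) * ∑ j ∈ Finset.range k, x ^ j / j !) := by
  rcases hx.eq_or_lt with rfl | hx
  · obtain ⟨k, rfl⟩ := Nat.exists_eq_succ_of_ne_zero hk
    rw [iidExp_setOf_le_sum_eq_one le_rfl, Finset.sum_range_succ']
    simp
  · exact iidExp_fin_setOf_le_sum_of_pos k hx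

end Erlang

theorem sq_div_two_add_add_one_le_sum_range {n : ℕ} (hn : 3 ≤ n) {x : ℝ} (hx : 0 ≤ x) :
    x ^ 2 / 2 + x + 1 ≤ ∑ j ∈ Finset.range n, x ^ j / j ! :=
  calc x ^ 2 / 2 + x + 1 = ∑ j ∈ Finset.range 3, x ^ j / j ! := by
        simp [Finset.sum_range_succ]
        ring
    _ ≤ _ := Finset.sum_le_sum_of_subset_of_nonneg (Finset.range_subset_range.2 hn)
        fun j _ _ => by positivity

/-- Lower bound on the non-outage probability of an $n$-link ($n\ge 3$) i.i.d. Rayleigh MAC: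
$P(\text{non-outage}) \ge e^{-\lambda(2^{R_n}-1)} G(\lambda\alpha_n)$ with
$G(x)=x^2/2+x+1$, $R_n=\sum r_i$, $\alpha_n=\prod(2^{r_i}-1)$. -/
theorem macn_nonoutage_lower (n : ℕ) (hn : 3 ≤ n) (lam : ℝ) (hlam : 0 < lam)
    (r : Fin n → ℝ) (hr : ∀ i, 0 ≤ r i) :
    ENNReal.ofReal (Real.exp (-(lam * ((2 : ℝ) ^ (∑ i, r i) - 1)))
        * ((lam * ∏ i, ((2 : ℝ) ^ r i - 1)) ^ 2 / 2
            + lam * ∏ i, ((2 : ℝ) ^ r i - 1) + 1))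
      ≤ iidExp (Fin n) {z | ∀ M : Finset (Fin n), M.Nonempty →
          lam * ((2 : ℝ) ^ (∑ i ∈ M, r i) - 1) ≤ ∑ i ∈ M, z i} := by
  obtain ⟨k, rfl⟩ : ∃ k, n = k + 1 := ⟨n - 1, by omega⟩
  set a : Fin (k + 1) → ℝ := fun i => 2 ^ r i - 1
  have ha : 0 ≤ a := fun i => sub_nonneg.2 (one_le_rpow one_le_two (hr i))
  have hpow (s : Finset (Fin (k + 1))) : (2 : ℝ) ^ (∑ i ∈ s, r i) = ∏ i ∈ s, (1 + a i) := by
    simp [a, rpow_sum_of_pos two_pos]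
  have htop : IsTop (Fin.last k) := Fin.le_last
  set x := lam * ∏ i, a i
  set c := cornerThreshold lam a (Fin.last k)
  have hx : 0 ≤ x := mul_nonneg hlam.le (Finset.prod_nonneg fun i _ => ha i)
  have hexp : lam * ((2 : ℝ) ^ (∑ i, r i) - 1) = ∑ i, c i + x := by
    rw [hpow, sum_cornerThreshold, if_pos (Finset.mem_univ _), sum_successiveWeight]
    ring
  have hA : MeasurableSet {y : Fin (k + 1) → ℝ | x ≤ ∑ i, y i} :=
    measurableSet_le measurable_const (by fun_prop)
  calc ENNReal.ofReal (exp (-(lam * ((2 : ℝ) ^ (∑ i, r i) - 1))) * (x ^ 2 / 2 + x + 1))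
      ≤ ENNReal.ofReal (exp (-∑ i, c i)) * ENNReal.ofReal
          (exp (-x) * ∑ j ∈ Finset.range (k + 1), x ^ j / j !) := by
        rw [← ENNReal.ofReal_mul (exp_pos _).le, hexp, neg_add, exp_add, mul_assoc]
        gcongr
        exact sq_div_two_add_add_one_le_sum_range hn hx
    _ = iidExp (Fin (k + 1)) (Set.Ici c ∩ (· - c) ⁻¹' {y | x ≤ ∑ i, y i}) := by
        rw [← iidExp_fin_setOf_le_sum k.succ_ne_zero hx, ← smul_eq_mul, ← Measure.smul_apply,
          ← iidExp_map_sub_restrict_Ici (cornerThreshold_nonneg ha hlam.le htop),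
          Measure.map_apply (measurable_sub_const c) hA,
          Measure.restrict_apply (measurable_sub_const c hA), Set.inter_comm]
    _ ≤ _ := by
        refine measure_mono ?_
        rintro z ⟨hz, hzA⟩ M -
        rw [hpow]
        exact le_sum_of_cornerThreshold_le ha hlam.le htop hz (by simpa using hzA) M
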